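/- Let f : X → ℝ be a filter on a Lefschetz complex and let y be a birth-giving cell with f(y) = b and a the preceding value of f. Then there is a unique chain c_y in the ℤ/2 chain group of the sublevel set X_a such that ∂c_y = ∂y and every cell in the support of c_y is a death-giving cell. -/
import Mathlib


attribute [local instance] Classical.propDecidable

/-- A Lefschetz complex over an ambient finite type `C` of potential cells:
a finite set `cells` of cells, a dimension function, and a mod-2 incidence
function `bd` supported on `cells`, with `bd x y ≠ 0` only if
`dim y = dim x + 1`, and `∂∘∂ = 0` mod 2. -/
structure LC (C : Type) [Fintype C] [DecidableEq C] : Type where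
  cells : Finset C
  dim : C → ℤ
  bd : C → C → ZMod 2
  bd_mem : ∀ x y, bd x y ≠ 0 → x ∈ cells ∧ y ∈ cells
  bd_dim : ∀ x y, bd x y ≠ 0 → dim y = dim x + 1
  bd_sq : ∀ x z, ∑ y, bd x y * bd y z = 0

variable {C : Type} [Fintype C] [DecidableEq C]

/-- A filter on a Lefschetz complex: injective on the cells, and increasing
along the facet relation. -/
def IsFilter (L : LC C) (f : C → ℝ) : Prop :=
  (∀ x ∈ L.cells, ∀ y ∈ L.cells, f x = f y → x = y) ∧
  ∀ x y, L.bd x y ≠ 0 → f x < f y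

lemma LC.bd_self (L : LC C) (a : C) : L.bd a a = 0 := by
  by_contra h
  have := L.bd_dim a a h
  omega

/-- The boundary map of the quotient after canceling `(s,t)`:
`∂'(x,y) = ∂(x,y) + ∂(s,y)·∂(x,t)` on the remaining cells, `0` elsewhere. -/
def cancelBd (L : LC C) (s t : C) : C → C → ZMod 2 := fun x y =>
  if x ∈ L.cells \ {s, t} ∧ y ∈ L.cells \ {s, t} then
    L.bd x y + L.bd s y * L.bd x t
  else 0

private lemma zmod2_add_self : ∀ a : ZMod 2, a + a = 0 := by decide

/-- The quotient Lefschetz complex after canceling the facet-cofacet pair `(s,t)`. -/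
noncomputable def cancel (L : LC C) (s t : C) : LC C :=
  if hst : L.bd s t = 1 then
    { cells := L.cells \ {s, t}
      dim := L.dim
      bd := cancelBd L s t
      bd_mem := by
        intro x y h
        unfold cancelBd at h
        split_ifs at h with hc
        · exact hc
        · exact absurd rfl h
      bd_dim := by
        intro x y h
        unfold cancelBd at h
        split_ifs at h with hc
        · by_cases hxy : L.bd x y = 0
          · rw [hxy, zero_add] at h
            have h1 : L.bd s y ≠ 0 := fun hz => by simp [hz] at h
            have h2 : L.bd x t ≠ 0 := fun hz => by simp [hz] at h
            have d1 := L.bd_dim s y h1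
            have d2 := L.bd_dim x t h2
            have d3 := L.bd_dim s t (by simp [hst])
            omega
          · exact L.bd_dim x y hxy
        · exact absurd rfl h
      bd_sq := by
        intro x z
        by_cases hx : x ∈ L.cells \ {s, t}
        swap
        · refine Finset.sum_eq_zero fun y _ => ?_
          unfold cancelBd
          rw [if_neg (fun hc => hx hc.1), zero_mul]
        by_cases hz : z ∈ L.cells \ {s, t}
        swap
        · refine Finset.sum_eq_zero fun y _ => ?_
          have h0 : cancelBd L s t y z = 0 := by
            unfold cancelBd; rw [if_neg (fun hc => hz hc.2)]
          rw [h0, mul_zero]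
        have key : ∀ y, cancelBd L s t x y * cancelBd L s t y z =
            (L.bd x y + L.bd s y * L.bd x t) * (L.bd y z + L.bd s z * L.bd y t) := by
          intro y
          by_cases hy : y ∈ L.cells \ {s, t}
          · unfold cancelBd
            rw [if_pos ⟨hx, hy⟩, if_pos ⟨hy, hz⟩]
          · have lhs0 : cancelBd L s t x y = 0 := by
              unfold cancelBd; rw [if_neg (fun hc => hy hc.2)]
            rw [lhs0, zero_mul]
            by_cases hyc : y ∈ L.cells
            · have hyst : y = s ∨ y = t := by
                simp only [Finset.mem_sdiff, Finset.mem_insert, Finset.mem_singleton] at hy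
                tauto
              rcases hyst with rfl | rfl
              · simp [L.bd_self, hst, zmod2_add_self]
              · simp [L.bd_self, hst, zmod2_add_self]
            · have b1 : L.bd x y = 0 := by
                by_contra hb; exact hyc (L.bd_mem x y hb).2
              have b2 : L.bd s y = 0 := by
                by_contra hb; exact hyc (L.bd_mem s y hb).2
              have b3 : L.bd y z = 0 := by
                by_contra hb; exact hyc (L.bd_mem y z hb).1
              have b4 : L.bd y t = 0 := by
                by_contra hb; exact hyc (L.bd_mem y t hb).1
              rw [b1, b2, b3, b4]
              ring
        rw [Finset.sum_congr rfl fun y _ => key y]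
        have expand : ∀ y : C,
            (L.bd x y + L.bd s y * L.bd x t) * (L.bd y z + L.bd s z * L.bd y t) =
            L.bd x y * L.bd y z + L.bd s z * (L.bd x y * L.bd y t)
              + L.bd x t * (L.bd s y * L.bd y z)
              + L.bd x t * L.bd s z * (L.bd s y * L.bd y t) := by
          intro y; ring
        rw [Finset.sum_congr rfl fun y _ => expand y]
        simp only [Finset.sum_add_distrib, ← Finset.mul_sum, L.bd_sq, mul_zero,
          add_zero, zero_add] }
  else L

/-- The boundary operator on mod-2 chains. -/
noncomputable def bdOp (L : LC C) : (C → ZMod 2) →ₗ[ZMod 2] (C → ZMod 2) where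
  toFun c := fun x => ∑ y, L.bd x y * c y
  map_add' a b := by
    funext x
    simp [mul_add, Finset.sum_add_distrib]
  map_smul' m a := by
    funext x
    simp only [Pi.smul_apply, smul_eq_mul, RingHom.id_apply]
    rw [Finset.mul_sum]
    exact Finset.sum_congr rfl fun y _ => by ring

/-- The `p`-chains of a Lefschetz complex: mod-2 chains supported on cells of
dimension `p`. -/
def chains (L : LC C) (p : ℤ) : Submodule (ZMod 2) (C → ZMod 2) where
  carrier := {c | ∀ x, c x ≠ 0 → x ∈ L.cells ∧ L.dim x = p}
  zero_mem' := by intro x hx; simp at hx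
  add_mem' := by
    intro a b ha hb x hx
    by_cases h1 : a x = 0
    · refine hb x fun h2 => hx ?_
      show a x + b x = 0
      rw [h1, h2, add_zero]
    · exact ha x h1
  smul_mem' := by
    intro m c hc x hx
    refine hc x fun h0 => hx ?_
    show m * c x = 0
    rw [h0, mul_zero]

/-- The `p`-cycles. -/
noncomputable def cycles (L : LC C) (p : ℤ) : Submodule (ZMod 2) (C → ZMod 2) :=
  chains L p ⊓ LinearMap.ker (bdOp L)

/-- The `p`-boundaries. -/
noncomputable def boundaries (L : LC C) (p : ℤ) : Submodule (ZMod 2) (C → ZMod 2) :=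
  Submodule.map (bdOp L) (chains L (p + 1))

/-- The mod-2 homology of a Lefschetz complex in dimension `p`. -/
noncomputable def homology (L : LC C) (p : ℤ) : Type :=
  cycles L p ⧸ (Submodule.comap (cycles L p).subtype (boundaries L p))

noncomputable instance (L : LC C) (p : ℤ) : AddCommGroup (homology L p) :=
  inferInstanceAs (AddCommGroup (cycles L p ⧸
    Submodule.comap (cycles L p).subtype (boundaries L p)))

noncomputable instance (L : LC C) (p : ℤ) : Module (ZMod 2) (homology L p) :=
  inferInstanceAs (Module (ZMod 2) (cycles L p ⧸
    Submodule.comap (cycles L p).subtype (boundaries L p)))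

/-- The boundary of the cell `y`, as a chain. -/
def col (L : LC C) (y : C) : C → ZMod 2 := fun x => L.bd x y

/-- The chain `v` is the boundary of a chain supported on cells with filter
value `< b`. -/
def IsBdryBelow (L : LC C) (f : C → ℝ) (b : ℝ) (v : C → ZMod 2) : Prop :=
  ∃ c : C → ZMod 2, (∀ z, c z ≠ 0 → z ∈ L.cells ∧ f z < b) ∧ bdOp L c = v

/-- The cell `y` gives death: `[∂y] ≠ 0` in the homology of the sublevel set
strictly below `f y`. -/
def givesDeath (L : LC C) (f : C → ℝ) (y : C) : Prop :=
  y ∈ L.cells ∧ ¬ IsBdryBelow L f (f y) (col L y)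

/-- The cell `y` gives birth: `[∂y] = 0` in the homology of the sublevel set
strictly below `f y`. -/
def givesBirth (L : LC C) (f : C → ℝ) (y : C) : Prop :=
  y ∈ L.cells ∧ IsBdryBelow L f (f y) (col L y)

/-- The unique chain supported on death-giving cells below `y` whose boundary
is `∂y` (for birth-giving `y`); junk value otherwise. -/
noncomputable def canChain (L : LC C) (f : C → ℝ) (y : C) : C → ZMod 2 :=
  if h : ∃ c : C → ZMod 2,
      (∀ z, c z ≠ 0 → f z < f y ∧ givesDeath L f z) ∧ bdOp L c = col L y
  then h.choose else 0

/-- The canonical cycle `d_y = y + c_y` of a birth-giving cell `y`. -/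
noncomputable def canCycle (L : LC C) (f : C → ℝ) (y : C) : C → ZMod 2 :=
  Pi.single y 1 + canChain L f y

/-- `v` and `w` are homologous in the sublevel complex strictly below `b`. -/
def HomBelow (L : LC C) (f : C → ℝ) (b : ℝ) (v w : C → ZMod 2) : Prop :=
  ∃ c : C → ZMod 2, (∀ z, c z ≠ 0 → z ∈ L.cells ∧ f z < b) ∧ bdOp L c = v + w

/-- Sorting a finset of cells by increasing filter value (fueled recursion). -/
noncomputable def sortAux (f : C → ℝ) : ℕ → Finset C → List C
  | 0, _ => []
  | n + 1, S =>
    if h : S.Nonempty then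
      let m := (Finset.exists_min_image S f h).choose
      m :: sortAux f n (S.erase m)
    else []

/-- The cells of `L` listed in increasing order of filter value. -/
noncomputable def sortedCells (L : LC C) (f : C → ℝ) : List C :=
  sortAux f L.cells.card L.cells

/-- An element of `S` maximizing `f`, with default value. -/
noncomputable def maxCellD (f : C → ℝ) (S : Finset C) (dflt : C) : C :=
  if h : S.Nonempty then (Finset.exists_max_image S f h).choose else dflt

/-- One step of the persistence pairing algorithm: the state is the pair
(unpaired birth-giving cells, birth-death pairs found so far), and `y` is the
next cell in the filter order.  If `y` gives birth it is added to the unpaired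
set; if `y` gives death, the unique subset `A` of the unpaired cells whose
canonical cycles sum to a cycle homologous to `∂y` below `y` is found, and `y`
is paired with the cell of `A` of maximal filter value. -/
noncomputable def pairStep (L : LC C) (f : C → ℝ) (st : Finset C × Finset (C × C))
    (y : C) : Finset C × Finset (C × C) :=
  if givesBirth L f y then (insert y st.1, st.2)
  else
    let A : Finset C :=
      if h : ∃! A : Finset C, A ⊆ st.1 ∧
          HomBelow L f (f y) (∑ x ∈ A, canCycle L f x) (col L y)
      then h.exists.choose else ∅
    let s := maxCellD f A y
    (st.1.erase s, insert (s, y) st.2)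

/-- The state of the persistence pairing after processing all cells. -/
noncomputable def pairState (L : LC C) (f : C → ℝ) : Finset C × Finset (C × C) :=
  (sortedCells L f).foldl (pairStep L f) (∅, ∅)

/-- The birth-death pairs `BD(f)` of the filter `f`. -/
noncomputable def BD (L : LC C) (f : C → ℝ) : Finset (C × C) :=
  (pairState L f).2

/-- The state of the persistence pairing after processing the cells with
filter value `< b`. -/
noncomputable def stateBelow (L : LC C) (f : C → ℝ) (b : ℝ) :
    Finset C × Finset (C × C) :=
  ((sortedCells L f).filter (fun x => decide (f x < b))).foldl (pairStep L f) (∅, ∅)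

/-- The birth-giving cells with value `< b` that are unpaired by the
persistence pairing restricted to the sublevel set below `b`. -/
noncomputable def unpairedBelow (L : LC C) (f : C → ℝ) (b : ℝ) : Finset C :=
  (stateBelow L f b).1

/-- `(s,t)` is a shallow pair: `s` is the facet of `t` with maximal filter
value and `t` is the cofacet of `s` with minimal filter value. -/
def IsShallow (L : LC C) (f : C → ℝ) (s t : C) : Prop :=
  L.bd s t = 1 ∧ (∀ x, L.bd x t ≠ 0 → f x ≤ f s) ∧ (∀ y, L.bd s y ≠ 0 → f t ≤ f y)

/-- Cancel a list of pairs in sequence. -/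
noncomputable def cancelList : LC C → List (C × C) → LC C
  | L, [] => L
  | L, p :: ps => cancelList (cancel L p.1 p.2) ps

/-- The quotient after canceling the first `k` pairs of the sequence `Φ`. -/
noncomputable def quotAt (L : LC C) {n : ℕ} (Φ : Fin n → C × C) (k : ℕ) : LC C :=
  cancelList L ((List.ofFn Φ).take k)

/-- `Φ` is a shallow order: an enumeration of the birth-death pairs of `f`
such that each pair is shallow for the quotient obtained by canceling all
preceding pairs. -/
def IsShallowOrder (L : LC C) (f : C → ℝ) {n : ℕ} (Φ : Fin n → C × C) : Prop :=
  Function.Injective Φ ∧ (∀ i, Φ i ∈ BD L f) ∧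
  ∀ i : Fin n, IsShallow (quotAt L Φ i) f (Φ i).1 (Φ i).2

/-- The depth poset: the intersection of the strict total orders induced on
`BD(f)` by all shallow orders. -/
def DepthRel (L : LC C) (f : C → ℝ) (φ ψ : C × C) : Prop :=
  φ ∈ BD L f ∧ ψ ∈ BD L f ∧
  ∀ Φ : Fin (BD L f).card → C × C, IsShallowOrder L f Φ →
    ∀ i j : Fin (BD L f).card, Φ i = φ → Φ j = ψ → i < j

/-- The rank of the lower-left minor of the ordered boundary matrix with rows
the cells of filter value `≥ a` and columns the cells of filter value `≤ b`. -/
noncomputable def llRank (L : LC C) (f : C → ℝ) (a b : ℝ) : ℕ :=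
  Matrix.rank (Matrix.of fun (x : {x : C // x ∈ L.cells ∧ a ≤ f x})
    (y : {y : C // y ∈ L.cells ∧ f y ≤ b}) => L.bd x.1 y.1)

/-- `Φ` and `Ψ` differ by transposing two adjacent positions. -/
def AdjSwap {n : ℕ} (Φ Ψ : Fin n → C × C) : Prop :=
  ∃ (k : Fin n) (hk : (k : ℕ) + 1 < n),
    Ψ k = Φ ⟨k + 1, hk⟩ ∧ Ψ ⟨k + 1, hk⟩ = Φ k ∧
    ∀ i : Fin n, i ≠ k → i ≠ ⟨k + 1, hk⟩ → Ψ i = Φ i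
private lemma zmod2_eq_one {a : ZMod 2} (h : a ≠ 0) : a = 1 := by
  revert h; revert a; decide

private lemma zmod2_eq_of_add_eq_zero {a b : ZMod 2} (h : a + b = 0) : a = b := by
  revert h; revert a b; decide

lemma bdOp_apply (L : LC C) (c : C → ZMod 2) (x : C) :
    bdOp L c x = ∑ y, L.bd x y * c y := rfl

lemma bdOp_single (L : LC C) (w : C) : bdOp L (Pi.single w 1) = col L w := by
  funext x
  rw [bdOp_apply]
  rw [Finset.sum_eq_single w]
  · simp [col]
  · intro y _ hyw; simp [Pi.single_apply, hyw]
  · simp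

/-- A cycle supported on death-giving cells is zero. -/
lemma death_cycle_zero (L : LC C) (f : C → ℝ) (hf : IsFilter L f)
    (d : C → ZMod 2) (hd : ∀ z, d z ≠ 0 → givesDeath L f z)
    (hbd : bdOp L d = 0) : d = 0 := by
  by_contra h
  have hne : (Finset.univ.filter (fun z => d z ≠ 0)).Nonempty := by
    by_contra h'
    apply h; funext x
    by_contra hx
    exact h' ⟨x, Finset.mem_filter.mpr ⟨Finset.mem_univ x, hx⟩⟩
  obtain ⟨w, hwS, hwmax⟩ := Finset.exists_max_image _ f hne
  have hwS' : d w ≠ 0 := (Finset.mem_filter.mp hwS).2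
  have hwdeath := hd w hwS'
  apply hwdeath.2
  refine ⟨d + Pi.single w 1, ?_, ?_⟩
  · intro z hz
    have hzw : z ≠ w := by
      intro hzw; subst hzw
      apply hz
      simp only [Pi.add_apply, Pi.single_eq_same]
      rw [zmod2_eq_one hwS']
      decide
    have hdz : d z ≠ 0 := by
      intro h0
      apply hz
      simp only [Pi.add_apply, Pi.single_eq_of_ne hzw]
      rw [h0, add_zero]
    have hzdeath := hd z hdz
    refine ⟨hzdeath.1, ?_⟩
    have hle := hwmax z (Finset.mem_filter.mpr ⟨Finset.mem_univ z, hdz⟩)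
    exact lt_of_le_of_ne hle (fun he => hzw (hf.1 z hzdeath.1 w hwdeath.1 he))
  · rw [map_add, hbd, zero_add, bdOp_single]

/-- Any chain supported below `b` is homologous (via boundary equality) to a
chain supported on death-giving cells below `b`. -/
lemma exists_death_repr (L : LC C) (f : C → ℝ) (hf : IsFilter L f) (b : ℝ) :
    ∀ n : ℕ, ∀ c : C → ZMod 2, (∀ z, c z ≠ 0 → z ∈ L.cells ∧ f z < b) →
    (Finset.univ.filter (fun z => z ∈ L.cells ∧
      ∃ w, c w ≠ 0 ∧ givesBirth L f w ∧ f z ≤ f w)).card ≤ n →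
    ∃ c', (∀ z, c' z ≠ 0 → f z < b ∧ givesDeath L f z) ∧ bdOp L c' = bdOp L c := by
  intro n
  induction n with
  | zero =>
    intro c hc hcard
    by_cases hB : ∃ w, c w ≠ 0 ∧ givesBirth L f w
    · exfalso
      obtain ⟨w, hw, hwb⟩ := hB
      have : w ∈ Finset.univ.filter (fun z => z ∈ L.cells ∧
          ∃ w', c w' ≠ 0 ∧ givesBirth L f w' ∧ f z ≤ f w') :=
        Finset.mem_filter.mpr ⟨Finset.mem_univ w, hwb.1, w, hw, hwb, le_refl _⟩
      have := Finset.card_pos.mpr ⟨w, this⟩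
      omega
    · refine ⟨c, ?_, rfl⟩
      intro z hz
      obtain ⟨hzc, hzb⟩ := hc z hz
      exact ⟨hzb, hzc, fun hbdry => hB ⟨z, hz, hzc, hbdry⟩⟩
  | succ n ih =>
    intro c hc hcard
    by_cases hB : ∃ w, c w ≠ 0 ∧ givesBirth L f w
    · have hTne : (Finset.univ.filter (fun w => c w ≠ 0 ∧ givesBirth L f w)).Nonempty := by
        obtain ⟨w, hw, hwb⟩ := hB
        exact ⟨w, Finset.mem_filter.mpr ⟨Finset.mem_univ w, hw, hwb⟩⟩
      obtain ⟨w, hwT, hwmax⟩ := Finset.exists_max_image _ f hTne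
      obtain ⟨hwc, hwb⟩ := (Finset.mem_filter.mp hwT).2
      obtain ⟨hwcell, c', hc'supp, hc'bd⟩ := hwb
      have hc'w : c' w = 0 := by
        by_contra h0
        exact absurd (hc'supp w h0).2 (lt_irrefl _)
      set c₂ : C → ZMod 2 := c + Pi.single w 1 + c' with hc₂def
      have hc₂w : c₂ w = 0 := by
        simp only [hc₂def, Pi.add_apply, Pi.single_eq_same]
        rw [hc'w, add_zero, zmod2_eq_one hwc]
        decide
      have hc₂supp : ∀ z, c₂ z ≠ 0 → (c z ≠ 0 ∨ c' z ≠ 0) ∧ z ≠ w := by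
        intro z hz
        have hzw : z ≠ w := fun h => by rw [h] at hz; exact hz hc₂w
        refine ⟨?_, hzw⟩
        by_contra h0
        push_neg at h0
        apply hz
        simp only [hc₂def, Pi.add_apply, Pi.single_eq_of_ne hzw]
        rw [h0.1, h0.2]
        decide
      have hsupp : ∀ z, c₂ z ≠ 0 → z ∈ L.cells ∧ f z < b := by
        intro z hz
        obtain ⟨hor, _⟩ := hc₂supp z hz
        rcases hor with h | h
        · exact hc z h
        · exact ⟨(hc'supp z h).1, lt_trans (hc'supp z h).2 (hc w hwc).2⟩
      -- every birth cell in the support of c₂ has filter value < f w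
      have hbirthlt : ∀ w', c₂ w' ≠ 0 → givesBirth L f w' → f w' < f w := by
        intro w' hw' hw'b
        obtain ⟨hor, hw'w⟩ := hc₂supp w' hw'
        rcases hor with h | h
        · have hle := hwmax w' (Finset.mem_filter.mpr ⟨Finset.mem_univ w', h, hw'b⟩)
          exact lt_of_le_of_ne hle (fun he => hw'w (hf.1 w' hw'b.1 w hwcell he))
        · exact (hc'supp w' h).2
      -- the measure strictly decreases
      set M := fun (cc : C → ZMod 2) => Finset.univ.filter (fun z => z ∈ L.cells ∧
        ∃ w', cc w' ≠ 0 ∧ givesBirth L f w' ∧ f z ≤ f w') with hMdef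
      have hsub : M c₂ ⊂ M c := by
        constructor
        · intro z hz
          obtain ⟨-, hzc, w', hw', hw'b, hle⟩ := Finset.mem_filter.mp hz
          refine Finset.mem_filter.mpr ⟨Finset.mem_univ z, hzc, w, hwc, ⟨hwcell, c', hc'supp, hc'bd⟩, ?_⟩
          exact le_of_lt (lt_of_le_of_lt hle (hbirthlt w' hw' hw'b))
        · intro hMc
          have hwM : w ∈ M c := Finset.mem_filter.mpr
            ⟨Finset.mem_univ w, hwcell, w, hwc, ⟨hwcell, c', hc'supp, hc'bd⟩, le_refl _⟩
          have := Finset.mem_filter.mp (hMc hwM)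
          obtain ⟨-, -, w', hw', hw'b, hle⟩ := this
          exact absurd (lt_of_le_of_lt hle (hbirthlt w' hw' hw'b)) (lt_irrefl _)
      have hcard₂ : (M c₂).card ≤ n := by
        have h1 := Finset.card_lt_card hsub
        have h2 : (M c).card ≤ n + 1 := hcard
        omega
      obtain ⟨c'', h1, h2⟩ := ih c₂ hsupp hcard₂
      refine ⟨c'', h1, ?_⟩
      rw [h2, hc₂def, map_add, map_add, bdOp_single, hc'bd]
      funext x
      show bdOp L c x + col L w x + col L w x = bdOp L c x
      rw [add_assoc, zmod2_add_self, add_zero]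
    · refine ⟨c, ?_, rfl⟩
      intro z hz
      obtain ⟨hzc, hzb⟩ := hc z hz
      exact ⟨hzb, hzc, fun hbdry => hB ⟨z, hz, hzc, hbdry⟩⟩

/-- For a birth-giving cell `y`, there is a unique chain
`c_y` in the chain group of the sublevel set strictly below `y` such that
`∂c_y = ∂y` and every cell in the support of `c_y` is death-giving. -/
theorem canonical_chain_exists_unique (L : LC C) (f : C → ℝ)
    (hf : IsFilter L f) (y : C) (hy : givesBirth L f y) :
    ∃! c : C → ZMod 2,
      (∀ z, c z ≠ 0 → f z < f y ∧ givesDeath L f z) ∧ bdOp L c = col L y := by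
  obtain ⟨hycell, c, hcsupp, hcbd⟩ := hy
  obtain ⟨c', hc'supp, hc'bd⟩ := exists_death_repr L f hf (f y)
    (Finset.univ.filter (fun z => z ∈ L.cells ∧
      ∃ w, c w ≠ 0 ∧ givesBirth L f w ∧ f z ≤ f w)).card c hcsupp (le_refl _)
  refine ⟨c', ⟨hc'supp, by rw [hc'bd, hcbd]⟩, ?_⟩
  intro c'' ⟨h''supp, h''bd⟩
  have hd : ∀ z, (c'' + c') z ≠ 0 → givesDeath L f z := by
    intro z hz
    by_cases h1 : c'' z = 0
    · refine ((hc'supp z fun h2 => hz ?_).2)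
      show c'' z + c' z = 0
      rw [h1, h2, add_zero]
    · exact (h''supp z h1).2
  have hbd0 : bdOp L (c'' + c') = 0 := by
    rw [map_add, h''bd, hc'bd, hcbd]
    funext x
    exact zmod2_add_self _
  have h0 := death_cycle_zero L f hf (c'' + c') hd hbd0
  funext x
  have : c'' x + c' x = 0 := congrFun h0 x
  exact zmod2_eq_of_add_eq_zero this
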